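/- arXiv:1308.1286 — 4 statements merged into one kernel-verified Lean document; each statement's English description precedes it below -/
import Mathlib

section
/- For every prime power q and every integer n ≥ 1, P_n(q) is a positive integer, and one has the identity of formal power series ∏_{n=1}^∞ (1 − x^n)^{−P_n(q)} = ∑_{i=0}^∞ q^i x^i; equivalently, for every N ≥ 0 the coefficient of x^N in ∏_{n=1}^N (1 − x^n)^{−P_n(q)} equals q^N. -/
/-!
Put `M(q, n) = ∑_{d ∣ n} μ(d) q^{n/d} = n P_n(q)`; Möbius inversion gives `∑_{d ∣ n} M(q, d) = q^n`.

`P_n(q)` is an integer: if `p^(k+1) ∥ n = p^(k+1) m`, the squarefree divisors of `n` come in pairs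
`e`, `p e` with `e ∣ m`, so `M(q, n)` is a combination of the differences
`a^(p^(k+1)) - a^(p^k)` (`a = q^(m/e)`), each divisible by `p^(k+1)` by Fermat's little theorem
lifted along `p`-power exponents. It is positive because the remaining terms of `M(q, n) - q^n`
are bounded in absolute value by `∑_{d < n} q^d < q^n` once `q ≥ 2`.

For the product `F = ∏_{n ≤ N} (1 - X^n)^{-P_n}`, logarithmic differentiation gives `X F' = F W`
with `W = ∑_{n ≤ N} n P_n X^n / (1 - X^n)`, and the `j`-th coefficient of `W` is
`∑_{d ∣ j} d P_d = q^j` for `1 ≤ j ≤ N`. Comparing coefficients, `k c_k = ∑_{i < k} c_i q^{k-i}`,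
which forces `c_k = q^k` by induction.
-/

open scoped ArithmeticFunction ArithmeticFunction.Moebius
open Finset PowerSeries

namespace Derivation

variable {R A : Type*} [CommSemiring R] [CommSemiring A] [Algebra R A] (D : Derivation R A A)

theorem map_pow_of_eq_mul {f w : A} (h : D f = f * w) (m : ℕ) :
    D (f ^ m) = f ^ m * (m • w) := by
  rcases m with _ | m
  · simp
  · rw [leibniz_pow, h, smul_eq_mul, nsmul_eq_mul, nsmul_eq_mul, pow_succ]
    simp only [Nat.add_sub_cancel]
    ring

theorem map_prod_of_eq_mul {ι : Type*} [DecidableEq ι] {s : Finset ι} {f w : ι → A}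
    (h : ∀ i ∈ s, D (f i) = f i * w i) : D (∏ i ∈ s, f i) = (∏ i ∈ s, f i) * ∑ i ∈ s, w i := by
  induction s using Finset.induction_on with
  | empty => simp
  | insert a s ha ih =>
    rw [prod_insert ha, sum_insert ha, leibniz, smul_eq_mul, smul_eq_mul,
      ih fun i hi => h i (mem_insert_of_mem hi), h a (mem_insert_self a s)]
    ring

end Derivation

namespace PowerSeries

theorem coeff_X_mul_derivative {R : Type*} [CommSemiring R] (f : R⟦X⟧) (k : ℕ) :
    coeff k (X * d⁄dX R f) = k * coeff k f := by
  rcases k with _ | k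
  · simp
  · rw [coeff_succ_X_mul, coeff_derivative, mul_comm, Nat.cast_succ]

variable {K : Type*} [Field K]

theorem inv_one_sub_X_pow_eq_expand {n : ℕ} (hn : n ≠ 0) :
    (1 - X ^ n : K⟦X⟧)⁻¹ = expand n hn (mk 1) := by
  rw [eq_comm, eq_inv_iff_mul_eq_one (by simp [hn]), ← expand_X n hn,
    ← map_one (expand n hn), ← map_sub, ← map_mul, mk_one_mul_one_sub_eq_one, map_one]

theorem coeff_inv_one_sub_X_pow {n : ℕ} (hn : n ≠ 0) (k : ℕ) :
    coeff k (1 - X ^ n : K⟦X⟧)⁻¹ = if n ∣ k then 1 else 0 := by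
  rw [inv_one_sub_X_pow_eq_expand hn, coeff_expand, coeff_mk, Pi.one_apply]

theorem X_mul_derivative_inv_one_sub_X_pow {n : ℕ} (hn : n ≠ 0) :
    X * d⁄dX K (1 - X ^ n)⁻¹ = (1 - X ^ n)⁻¹ * (n • ((1 - X ^ n)⁻¹ - 1)) := by
  have hinv : (1 - X ^ n : K⟦X⟧)⁻¹ * (1 - X ^ n) = 1 :=
    PowerSeries.inv_mul_cancel _ (by simp [hn])
  have hX : (X : K⟦X⟧) * X ^ (n - 1) = X ^ n := by
    rw [← pow_succ', Nat.sub_add_cancel (Nat.pos_of_ne_zero hn)]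
  rw [derivative_inv', map_sub, derivative_one, derivative_pow, derivative_X, nsmul_eq_mul]
  linear_combination (-(n : K⟦X⟧) * (1 - X ^ n)⁻¹) * hinv + (n * (1 - X ^ n : K⟦X⟧)⁻¹ ^ 2) * hX

theorem X_mul_derivative_prod_inv_one_sub_X_pow_pow {s : Finset ℕ} (hs : 0 ∉ s) (a : ℕ → ℕ) :
    X * d⁄dX K (∏ n ∈ s, (1 - X ^ n)⁻¹ ^ a n) =
      (∏ n ∈ s, (1 - X ^ n)⁻¹ ^ a n) * ∑ n ∈ s, (n * a n) • ((1 - X ^ n)⁻¹ - 1) := by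
  -- The Euler operator `f ↦ X * f'` is the derivation `X • d⁄dX K`.
  refine ((X : K⟦X⟧) • d⁄dX K).map_prod_of_eq_mul fun n hn => ?_
  have hn0 : n ≠ 0 := fun h => hs (h ▸ hn)
  rw [((X : K⟦X⟧) • d⁄dX K).map_pow_of_eq_mul (X_mul_derivative_inv_one_sub_X_pow hn0),
    mul_comm n, mul_smul]

theorem coeff_sum_nsmul_inv_one_sub_X_pow_sub_one (s : Finset ℕ) (c : ℕ → ℕ) {j : ℕ}
    (hj : j ≠ 0) :
    coeff j (∑ n ∈ s, c n • ((1 - X ^ n : K⟦X⟧)⁻¹ - 1)) = ∑ n ∈ s with n ∣ j, (c n : K) := by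
  rw [map_sum, sum_filter]
  refine sum_congr rfl fun n _ => ?_
  rw [map_nsmul, map_sub, coeff_one, if_neg hj, sub_zero, nsmul_eq_mul]
  rcases eq_or_ne n 0 with rfl | hn
  · simp [hj]
  · rw [coeff_inv_one_sub_X_pow hn]
    split_ifs <;> simp

theorem coeff_eq_pow_of_X_mul_derivative_eq_mul [CharZero K] {F W : K⟦X⟧} {q : K} {N : ℕ}
    (hF : X * d⁄dX K F = F * W) (hF0 : constantCoeff F = 1) (hW0 : constantCoeff W = 0)
    (hW : ∀ j, 0 < j → j ≤ N → coeff j W = q ^ j) {k : ℕ} (hk : k ≤ N) : coeff k F = q ^ k := by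
  induction k using Nat.strong_induction_on with
  | _ k ih =>
  rcases Nat.eq_zero_or_pos k with rfl | hk0
  · simpa using hF0
  have hrec : (k : K) * coeff k F = k * q ^ k := by
    calc (k : K) * coeff k F = coeff k (F * W) := by rw [← hF, coeff_X_mul_derivative]
      _ = ∑ i ∈ range k, coeff i F * coeff (k - i) W := by
        rw [coeff_mul, Nat.sum_antidiagonal_eq_sum_range_succ (fun i j => coeff i F * coeff j W),
          sum_range_succ, Nat.sub_self, coeff_zero_eq_constantCoeff_apply W, hW0, mul_zero,
          add_zero]
      _ = ∑ i ∈ range k, q ^ k := by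
        refine sum_congr rfl fun i hi => ?_
        have hi : i < k := mem_range.mp hi
        rw [ih i hi (by omega), hW (k - i) (by omega) (by omega), ← pow_add,
          Nat.add_sub_cancel' hi.le]
      _ = k * q ^ k := by rw [sum_const, card_range, nsmul_eq_mul]
  exact mul_left_cancel₀ (Nat.cast_ne_zero.mpr hk0.ne') hrec

theorem coeff_prod_Icc_inv_one_sub_X_pow_pow [CharZero K] {a : ℕ → ℕ} {q : K}
    (ha : ∀ j, 0 < j → ∑ d ∈ j.divisors, ((d * a d : ℕ) : K) = q ^ j) (N : ℕ) :
    coeff N (∏ n ∈ Icc 1 N, (1 - X ^ n : K⟦X⟧)⁻¹ ^ a n) = q ^ N := by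
  refine coeff_eq_pow_of_X_mul_derivative_eq_mul
    (X_mul_derivative_prod_inv_one_sub_X_pow_pow (by simp) a) ?_ ?_ ?_ le_rfl
  · rw [map_prod]
    refine prod_eq_one fun n hn => ?_
    simp [Nat.one_le_iff_ne_zero.mp (mem_Icc.mp hn).1]
  · rw [← coeff_zero_eq_constantCoeff_apply, map_sum]
    refine sum_eq_zero fun n hn => ?_
    simp [Nat.one_le_iff_ne_zero.mp (mem_Icc.mp hn).1]
  · intro j hj hjN
    have hdiv : {n ∈ Icc 1 N | n ∣ j} = j.divisors := by
      ext n
      simp only [mem_filter, mem_Icc, Nat.mem_divisors]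
      constructor
      · rintro ⟨-, hnj⟩
        exact ⟨hnj, hj.ne'⟩
      · rintro ⟨hnj, -⟩
        exact ⟨⟨Nat.pos_of_dvd_of_pos hnj hj, (Nat.le_of_dvd hj hnj).trans hjN⟩, hnj⟩
    rw [coeff_sum_nsmul_inv_one_sub_X_pow_sub_one _ _ hj.ne', hdiv, ha j hj]

end PowerSeries

def moebiusPowSum (q : ℤ) (n : ℕ) : ℤ := ∑ d ∈ n.divisors, μ d * q ^ (n / d)

theorem sum_divisors_moebiusPowSum (q : ℤ) {n : ℕ} (hn : 0 < n) :
    ∑ d ∈ n.divisors, moebiusPowSum q d = q ^ n :=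
  ArithmeticFunction.sum_eq_iff_sum_mul_moebius_eq.mpr (fun m _ => by
    simp only [Int.cast_id]
    exact Nat.sum_divisorsAntidiagonal fun i j => μ i * q ^ j) n hn

theorem moebiusPowSum_eq_pow_add (q : ℤ) {n : ℕ} (hn : n ≠ 0) :
    moebiusPowSum q n = q ^ n + ∑ d ∈ n.properDivisors, μ (n / d) * q ^ d := by
  rw [moebiusPowSum, ← Nat.sum_div_divisors, ← Nat.cons_self_properDivisors hn, sum_cons,
    Nat.div_self (Nat.pos_of_ne_zero hn), ArithmeticFunction.moebius_apply_one, one_mul,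
    Nat.div_one]
  congr 1
  refine sum_congr rfl fun d hd => ?_
  rw [Nat.div_div_self (Nat.mem_properDivisors.mp hd).1 hn]

theorem moebiusPowSum_pos {q : ℕ} (hq : 2 ≤ q) {n : ℕ} (hn : 0 < n) :
    0 < moebiusPowSum q n := by
  have hgeom : ∑ d ∈ n.properDivisors, (q : ℤ) ^ d < (q : ℤ) ^ n := by
    exact_mod_cast Nat.geomSum_lt hq fun d hd => (Nat.mem_properDivisors.mp hd).2
  have habs : |∑ d ∈ n.properDivisors, μ (n / d) * (q : ℤ) ^ d| ≤
      ∑ d ∈ n.properDivisors, (q : ℤ) ^ d := by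
    refine (abs_sum_le_sum_abs _ _).trans (sum_le_sum fun d _ => ?_)
    rw [abs_mul, abs_pow, Nat.abs_cast]
    exact mul_le_of_le_one_left (by positivity) ArithmeticFunction.abs_moebius_le_one
  rw [moebiusPowSum_eq_pow_add _ hn.ne']
  linarith [neg_abs_le (∑ d ∈ n.properDivisors, μ (n / d) * (q : ℤ) ^ d)]

theorem Int.prime_pow_succ_dvd_pow_prime_pow_succ_sub (a : ℤ) {p : ℕ} (hp : p.Prime) (k : ℕ) :
    (p : ℤ) ^ (k + 1) ∣ a ^ p ^ (k + 1) - a ^ p ^ k := by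
  have hfermat : (p : ℤ) ∣ a ^ p - a := by
    have := Fact.mk hp
    rw [← ZMod.intCast_zmod_eq_zero_iff_dvd]
    push_cast
    rw [ZMod.pow_card, sub_self]
  simpa only [← pow_mul, pow_succ'] using dvd_sub_pow_of_dvd_sub hfermat k

theorem sum_divisors_prime_pow_mul_moebius (g : ℕ → ℤ) {p : ℕ} (hp : p.Prime) (k : ℕ) {m : ℕ}
    (hpm : p.Coprime m) :
    ∑ d ∈ (p ^ (k + 1) * m).divisors, μ d * g (p ^ (k + 1) * m / d) =
      ∑ e ∈ m.divisors, μ e * (g (p ^ (k + 1) * (m / e)) - g (p ^ k * (m / e))) := by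
  rw [(hpm.pow_left _).divisors_mul, sum_map]
  refine (sum_attach ((p ^ (k + 1)).divisors ×ˢ m.divisors)
    fun x => μ (x.1 * x.2) * g (p ^ (k + 1) * m / (x.1 * x.2))).trans ?_
  rw [sum_product, Nat.sum_divisors_prime_pow hp, sum_comm]
  refine sum_congr rfl fun e he => ?_
  have hem : e ∣ m := Nat.dvd_of_mem_divisors he
  have hpe : p.Coprime e := hpm.coprime_dvd_right hem
  have hmu : ∀ i, μ (p ^ i * e) = μ (p ^ i) * μ e := fun i =>
    ArithmeticFunction.isMultiplicative_moebius.map_mul_of_coprime (hpe.pow_left i)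
  rw [sum_range_succ', sum_range_succ', sum_eq_zero fun i _ => by
      rw [hmu, ArithmeticFunction.moebius_apply_prime_pow hp (by omega), if_neg (by omega),
        zero_mul, zero_mul]]
  rw [hmu, hmu, pow_one, pow_zero, ArithmeticFunction.moebius_apply_prime hp,
    ArithmeticFunction.moebius_apply_one, Nat.mul_div_mul_comm (dvd_pow_self p (by omega)) hem,
    pow_succ, Nat.mul_div_cancel _ hp.pos, one_mul, Nat.mul_div_mul_comm (one_dvd _) hem,
    Nat.div_one]
  ring

theorem pow_factorization_dvd_moebiusPowSum (q : ℤ) {n p : ℕ} (hp : p.Prime) (hn : n ≠ 0) :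
    (p : ℤ) ^ n.factorization p ∣ moebiusPowSum q n := by
  cases hk : n.factorization p with
  | zero => simp
  | succ k =>
  obtain ⟨m, hpm, hnm⟩ : ∃ m, p.Coprime m ∧ n = p ^ (k + 1) * m :=
    ⟨_, Nat.coprime_ordCompl hp hn, by rw [← hk, Nat.ordProj_mul_ordCompl_eq_self]⟩
  rw [moebiusPowSum, hnm, sum_divisors_prime_pow_mul_moebius _ hp k hpm]
  refine dvd_sum fun e _ => dvd_mul_of_dvd_right ?_ _
  simpa only [pow_mul'] using Int.prime_pow_succ_dvd_pow_prime_pow_succ_sub (q ^ (m / e)) hp k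

theorem natCast_dvd_moebiusPowSum (q : ℤ) (n : ℕ) : (n : ℤ) ∣ moebiusPowSum q n := by
  rcases eq_or_ne n 0 with rfl | hn
  · simp [moebiusPowSum]
  rcases eq_or_ne (moebiusPowSum q n) 0 with h0 | h0
  · rw [h0]
    exact dvd_zero _
  rw [Int.natCast_dvd]
  refine (Nat.factorization_prime_le_iff_dvd hn (Int.natAbs_ne_zero.mpr h0)).mp fun p hp => ?_
  rw [← hp.pow_dvd_iff_le_factorization (Int.natAbs_ne_zero.mpr h0), ← Int.natCast_dvd]
  exact_mod_cast pow_factorization_dvd_moebiusPowSum q hp hn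

/-- For a prime power `q`, `P_n(q) = (1/n) ∑_{ij=n} μ(i) q^j` is a positive integer for
every `n ≥ 1`, and `∏_{n≥1} (1 - x^n)^{-P_n(q)} = ∑_{i≥0} q^i x^i` as formal power
series; coefficientwise, for every `N` the coefficient of `x^N` in
`∏_{n=1}^N (1 - x^n)^{-P_n(q)}` equals `q^N`. -/
theorem euler_product_identity_for_prime_power (q : ℕ) (hq : IsPrimePow q) :
    ∃ P : ℕ → ℕ,
      (∀ n : ℕ, 1 ≤ n →
        0 < P n ∧
        (P n : ℚ) = (∑ d ∈ n.divisors, (μ d : ℚ) * (q : ℚ) ^ (n / d)) / n) ∧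
      ∀ N : ℕ,
        PowerSeries.coeff (R := ℚ) N
            (∏ n ∈ Finset.Icc 1 N, ((1 - PowerSeries.X ^ n)⁻¹) ^ P n) = (q : ℚ) ^ N := by
  have hpos : ∀ n, 0 < n → 0 < moebiusPowSum q n / n := fun n hn =>
    Int.ediv_pos_of_pos_of_dvd (moebiusPowSum_pos hq.two_le hn) (by positivity)
      (natCast_dvd_moebiusPowSum q n)
  have hmul : ∀ n, 0 < n → ((n * (moebiusPowSum q n / n).toNat : ℕ) : ℤ) = moebiusPowSum q n :=
    fun n hn => by
      rw [Nat.cast_mul, Int.toNat_of_nonneg (hpos n hn).le,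
        Int.mul_ediv_cancel' (natCast_dvd_moebiusPowSum q n)]
  refine ⟨fun n => (moebiusPowSum q n / n).toNat, fun n hn => ⟨Int.lt_toNat.mpr (hpos n hn), ?_⟩,
    PowerSeries.coeff_prod_Icc_inv_one_sub_X_pow_pow fun j hj => ?_⟩
  · have hcast : ((moebiusPowSum q n : ℤ) : ℚ) =
        ∑ d ∈ n.divisors, (μ d : ℚ) * (q : ℚ) ^ (n / d) := by
      push_cast [moebiusPowSum]
      rfl
    rw [eq_div_iff (by positivity), mul_comm, ← hcast]
    exact_mod_cast hmul n hn
  · exact_mod_cast (sum_congr rfl fun d hd => hmul d (Nat.pos_of_mem_divisors hd)).trans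
      (sum_divisors_moebiusPowSum q hj)
end

section
/- Let 0 < a1 ≤ a2 be real numbers, let q ≥ 2 be a real number, and let e_1, e_2, … be non-negative integers satisfying a1 q^i / i ≤ e_i ≤ a2 q^i / i for all i ≥ 1. Define non-negative reals c_{i,j} by the two-variable formal power series identity ∑_{i,j} c_{i,j} x^i y^j = ∏_{i=1}^∞ (1 − x^i y)^{−e_i}. Then there exist constants C and D > 1, depending only on a1 and a2, such that for all integers n ≥ 1 and 0 ≤ m ≤ n: (∑_{j=m+1}^n c_{n,j}) / (∑_{j=0}^n c_{n,j}) ≤ n^C · D^{−m}. -/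
/-!
Only monomials of `x`-degree at most `n` matter, and modulo `x ^ (n + 1)` each factor
`(1 - x ^ i y)⁻¹` agrees with the polynomial `∑_{k ≤ n} (x ^ i y) ^ k`; so the `c_{n,j}` are
coefficients of a polynomial `P` with nonnegative coefficients. The denominator is at least
`c_{n,1} ≥ e_n ≥ a₁ qⁿ / n`. The numerator is bounded by Rankin's trick,
`∑_{j > m} c_{n,j} ≤ (3/2)^(-m) ∑_j c_{n,j} (3/2)^j ≤ (3/2)^(-m) qⁿ P(1/q, 3/2)`, and
`P(1/q, 3/2) ≤ ∏_{i ≤ n} (1 - (3/2) q^(-i))^(-e_i) ≤ exp (6 a₂ ∑_{i ≤ n} 1/i) ≤ e^(6 a₂) n^(6 a₂)`.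
-/

open Finset

namespace MvPolynomial

section NonnegCoeffs

variable (σ R : Type*) [CommSemiring R] [PartialOrder R] [IsOrderedRing R]

def nonnegCoeffs : Subsemiring (MvPolynomial σ R) where
  carrier := {p | ∀ d, 0 ≤ p.coeff d}
  mul_mem' {p q} hp hq d := by
    classical
    rw [coeff_mul]
    exact sum_nonneg fun x _ => mul_nonneg (hp _) (hq _)
  one_mem' d := by
    classical
    rw [coeff_one]
    split_ifs <;> simp
  add_mem' hp hq d := by
    rw [coeff_add]
    exact add_nonneg (hp d) (hq d)
  zero_mem' d := by simp

variable {σ R}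

lemma X_mem_nonnegCoeffs (s : σ) : X s ∈ nonnegCoeffs σ R := fun d => by
  classical
  rw [coeff_X]
  split_ifs <;> simp

lemma coeff_add_coeff_le_coeff_mul {p q : MvPolynomial σ R} (hp : p ∈ nonnegCoeffs σ R)
    (hq : q ∈ nonnegCoeffs σ R) (hp₀ : constantCoeff p = 1) (hq₀ : constantCoeff q = 1)
    {u : σ →₀ ℕ} (hu : u ≠ 0) : p.coeff u + q.coeff u ≤ (p * q).coeff u := by
  classical
  have hpair : (u, (0 : σ →₀ ℕ)) ≠ (0, u) := fun h => hu (congrArg Prod.fst h)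
  calc p.coeff u + q.coeff u
      = ∑ x ∈ {(u, 0), (0, u)}, p.coeff x.1 * q.coeff x.2 := by
        rw [sum_pair hpair, show q.coeff 0 = 1 from hq₀, show p.coeff 0 = 1 from hp₀, mul_one,
          one_mul]
    _ ≤ ∑ x ∈ antidiagonal u, p.coeff x.1 * q.coeff x.2 :=
        sum_le_sum_of_subset_of_nonneg (by simp [insert_subset_iff])
          fun x _ _ => mul_nonneg (hp _) (hq _)
    _ = (p * q).coeff u := (coeff_mul _ _ _).symm

lemma nsmul_coeff_le_coeff_pow {p : MvPolynomial σ R} (hp : p ∈ nonnegCoeffs σ R)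
    (hp₀ : constantCoeff p = 1) {u : σ →₀ ℕ} (hu : u ≠ 0) (e : ℕ) :
    e • p.coeff u ≤ (p ^ e).coeff u := by
  induction e with
  | zero => rw [zero_nsmul, pow_zero]; exact one_mem (nonnegCoeffs σ R) u
  | succ e ih =>
    rw [succ_nsmul, pow_succ]
    exact (add_le_add_left ih _).trans <| coeff_add_coeff_le_coeff_mul
      (pow_mem hp e) hp (by rw [map_pow, hp₀, one_pow]) hp₀ hu

lemma sum_coeff_mul_prod_pow_le_eval [Fintype σ] {p : MvPolynomial σ R}
    (hp : p ∈ nonnegCoeffs σ R) {w : σ → R} (hw : ∀ i, 0 ≤ w i) (s : Finset (σ →₀ ℕ)) :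
    ∑ d ∈ s, p.coeff d * ∏ i, w i ^ d i ≤ eval w p := by
  classical
  have hterm : ∀ d, 0 ≤ p.coeff d * ∏ i, w i ^ d i := fun d =>
    mul_nonneg (hp d) (prod_nonneg fun i _ => pow_nonneg (hw i) _)
  rw [eval_eq']
  calc ∑ d ∈ s, p.coeff d * ∏ i, w i ^ d i
      ≤ ∑ d ∈ s ∪ p.support, p.coeff d * ∏ i, w i ^ d i :=
        sum_le_sum_of_subset_of_nonneg subset_union_left fun d _ _ => hterm d
    _ = ∑ d ∈ p.support, p.coeff d * ∏ i, w i ^ d i :=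
        (sum_subset subset_union_right fun d _ hd => by
          rw [notMem_support_iff.mp hd, zero_mul]).symm

lemma eval_nonneg_of_mem_nonnegCoeffs [Fintype σ] {p : MvPolynomial σ R}
    (hp : p ∈ nonnegCoeffs σ R) {w : σ → R} (hw : ∀ i, 0 ≤ w i) : 0 ≤ eval w p := by
  simpa using sum_coeff_mul_prod_pow_le_eval hp hw ∅

lemma sum_coeff_mul_pow_le_eval {p : MvPolynomial (Fin 2) R} (hp : p ∈ nonnegCoeffs (Fin 2) R)
    {a b : R} (ha : 0 ≤ a) (hb : 0 ≤ b) (n N : ℕ) :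
    ∑ j ∈ range N, p.coeff (Finsupp.single 0 n + Finsupp.single 1 j) * (a ^ n * b ^ j) ≤
      eval ![a, b] p := by
  have hinj : Set.InjOn (fun j => Finsupp.single (0 : Fin 2) n + Finsupp.single 1 j) (range N) :=
    fun j _ k _ h => by simpa using congrArg (· 1) h
  calc _ = ∑ d ∈ (range N).image (fun j => Finsupp.single (0 : Fin 2) n + Finsupp.single 1 j),
        p.coeff d * ∏ i, ![a, b] i ^ d i := by
        rw [sum_image hinj]; simp [Fin.prod_univ_two]
    _ ≤ eval ![a, b] p :=
        sum_coeff_mul_prod_pow_le_eval hp (by simp [Fin.forall_fin_two, ha, hb]) _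

end NonnegCoeffs

end MvPolynomial

namespace MvPowerSeries

lemma coeff_eq_of_X_pow_dvd_sub {σ R : Type*} [CommRing R] {f g : MvPowerSeries σ R} {s : σ}
    {N : ℕ} (h : X s ^ N ∣ f - g) {d : σ →₀ ℕ} (hd : d s < N) : coeff d f = coeff d g :=
  sub_eq_zero.mp (by rw [← map_sub]; exact X_pow_dvd_iff.mp h d hd)

end MvPowerSeries

lemma Ideal.prod_pow_sub_prod_pow_mem {R ι : Type*} [CommRing R] {I : Ideal R} {s : Finset ι}
    {f g : ι → R} (h : ∀ i ∈ s, f i - g i ∈ I) (e : ι → ℕ) :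
    ∏ i ∈ s, f i ^ e i - ∏ i ∈ s, g i ^ e i ∈ I := by
  rw [← Ideal.Quotient.eq]
  simp only [map_prod, map_pow]
  exact prod_congr rfl fun i hi => by rw [Ideal.Quotient.eq.mpr (h i hi)]

lemma sub_geom_sum_eq_pow_mul {R : Type*} [CommRing R] {a u : R} (hu : u * (1 - a) = 1)
    (N : ℕ) : u - ∑ k ∈ range N, a ^ k = a ^ N * u :=
  calc u - ∑ k ∈ range N, a ^ k = u - (∑ k ∈ range N, a ^ k) * (1 - a) * u := by
        rw [mul_assoc, mul_comm (1 - a), hu, mul_one]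
    _ = a ^ N * u := by rw [geom_sum_mul_neg]; ring

lemma geom_sum_le_exp {r : ℝ} (hr₀ : 0 ≤ r) (hr : r ≤ 3 / 4) (N : ℕ) :
    ∑ k ∈ range N, r ^ k ≤ Real.exp (4 * r) :=
  calc ∑ k ∈ range N, r ^ k ≤ r ^ 0 / (1 - r) := by
        rw [range_eq_Ico]; exact geom_sum_Ico_le_of_lt_one hr₀ (by linarith)
    _ ≤ 4 * r + 1 := by
        rw [pow_zero, div_le_iff₀ (by linarith)]; nlinarith
    _ ≤ Real.exp (4 * r) := Real.add_one_le_exp _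

lemma sum_Icc_le_rpow_neg_mul_sum {c : ℕ → ℝ} (hc : ∀ j, 0 ≤ c j) {D : ℝ} (hD : 1 ≤ D)
    (m n : ℕ) :
    ∑ j ∈ Icc (m + 1) n, c j ≤ D ^ (-(m : ℝ)) * ∑ j ∈ range (n + 1), c j * D ^ j := by
  rw [mul_sum]
  calc ∑ j ∈ Icc (m + 1) n, c j ≤ ∑ j ∈ Icc (m + 1) n, D ^ (-(m : ℝ)) * (c j * D ^ j) := by
        refine sum_le_sum fun j hj => ?_
        have hmj : (m : ℝ) ≤ j := by
          have := (mem_Icc.mp hj).1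
          exact_mod_cast (by omega : m ≤ j)
        have : 1 ≤ D ^ (-(m : ℝ)) * D ^ j := by
          rw [← Real.rpow_natCast, ← Real.rpow_add (by linarith)]
          exact Real.one_le_rpow hD (by linarith)
        nlinarith [hc j]
    _ ≤ ∑ j ∈ range (n + 1), D ^ (-(m : ℝ)) * (c j * D ^ j) :=
        sum_le_sum_of_subset_of_nonneg (fun j hj => by simp at hj ⊢; omega)
          fun j _ _ => by have := hc j; positivity

lemma sum_Icc_inv_le_one_add_log (n : ℕ) : ∑ i ∈ Icc 1 n, (i : ℝ)⁻¹ ≤ 1 + Real.log n := by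
  have h := harmonic_le_one_add_log n
  rw [harmonic_eq_sum_Icc] at h
  push_cast at h
  exact h

lemma exists_le_rpow_of_two_le (K : ℝ) : ∃ L : ℝ, 0 ≤ L ∧ ∀ x : ℝ, 2 ≤ x → K ≤ x ^ L := by
  obtain ⟨N, hN⟩ := pow_unbounded_of_one_lt K one_lt_two
  refine ⟨N, N.cast_nonneg, fun x hx => hN.le.trans ?_⟩
  rw [Real.rpow_natCast]
  exact pow_le_pow_left₀ zero_le_two hx N

namespace EulerProduct

open MvPolynomial

noncomputable def geomTrunc (i n : ℕ) : MvPolynomial (Fin 2) ℝ :=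
  ∑ k ∈ range (n + 1), (X 0 ^ i * X 1) ^ k

noncomputable def eulerTrunc (e : ℕ → ℕ) (n : ℕ) : MvPolynomial (Fin 2) ℝ :=
  ∏ i ∈ Icc 1 n, geomTrunc i n ^ e i

lemma X_pow_mul_X_mem_nonnegCoeffs (i : ℕ) :
    (X 0 ^ i * X 1 : MvPolynomial (Fin 2) ℝ) ∈ nonnegCoeffs (Fin 2) ℝ :=
  mul_mem (pow_mem (X_mem_nonnegCoeffs 0) _) (X_mem_nonnegCoeffs 1)

lemma geomTrunc_mem_nonnegCoeffs (i n : ℕ) : geomTrunc i n ∈ nonnegCoeffs (Fin 2) ℝ :=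
  sum_mem fun k _ => pow_mem (X_pow_mul_X_mem_nonnegCoeffs i) k

lemma eulerTrunc_mem_nonnegCoeffs (e : ℕ → ℕ) (n : ℕ) :
    eulerTrunc e n ∈ nonnegCoeffs (Fin 2) ℝ :=
  prod_mem fun i _ => pow_mem (geomTrunc_mem_nonnegCoeffs i n) _

lemma constantCoeff_geomTrunc (i n : ℕ) : constantCoeff (geomTrunc i n) = 1 := by
  simp [geomTrunc, sum_range_succ']

lemma one_le_coeff_geomTrunc {n : ℕ} (hn : 1 ≤ n) :
    1 ≤ (geomTrunc n n).coeff (Finsupp.single 0 n + Finsupp.single 1 1) := by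
  rw [geomTrunc, coeff_sum]
  calc (1 : ℝ) = ((X 0 ^ n * X 1 : MvPolynomial (Fin 2) ℝ) ^ 1).coeff
        (Finsupp.single 0 n + Finsupp.single 1 1) := by
        rw [pow_one, X_pow_eq_monomial, X, monomial_mul, one_mul, coeff_monomial, if_pos rfl]
    _ ≤ _ := single_le_sum (fun k _ => pow_mem (X_pow_mul_X_mem_nonnegCoeffs n) k _)
        (mem_range.mpr (by omega : 1 < n + 1))

lemma le_coeff_eulerTrunc (e : ℕ → ℕ) {n : ℕ} (hn : 1 ≤ n) :
    (e n : ℝ) ≤ (eulerTrunc e n).coeff (Finsupp.single 0 n + Finsupp.single 1 1) := by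
  set u : Fin 2 →₀ ℕ := Finsupp.single 0 n + Finsupp.single 1 1
  have hu : u ≠ 0 := fun h => by simpa [u] using congrArg (· 1) h
  set rest := ∏ i ∈ (Icc 1 n).erase n, geomTrunc i n ^ e i
  have hrest : rest ∈ nonnegCoeffs (Fin 2) ℝ :=
    prod_mem fun i _ => pow_mem (geomTrunc_mem_nonnegCoeffs i n) _
  have hrest₀ : constantCoeff rest = 1 := by
    simp only [rest, map_prod, map_pow, constantCoeff_geomTrunc, one_pow, prod_const_one]
  have hpow₀ : constantCoeff (geomTrunc n n ^ e n) = 1 := by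
    rw [map_pow, constantCoeff_geomTrunc, one_pow]
  rw [eulerTrunc, ← mul_prod_erase _ _ (mem_Icc.mpr ⟨hn, le_rfl⟩)]
  calc (e n : ℝ) ≤ e n • (geomTrunc n n).coeff u := by
        rw [nsmul_eq_mul]
        exact le_mul_of_one_le_right (by positivity) (one_le_coeff_geomTrunc hn)
    _ ≤ (geomTrunc n n ^ e n).coeff u := nsmul_coeff_le_coeff_pow
        (geomTrunc_mem_nonnegCoeffs n n) (constantCoeff_geomTrunc n n) hu _
    _ ≤ (geomTrunc n n ^ e n).coeff u + rest.coeff u := le_add_of_nonneg_right (hrest u)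
    _ ≤ _ := coeff_add_coeff_le_coeff_mul
        (pow_mem (geomTrunc_mem_nonnegCoeffs n n) _) hrest hpow₀ hrest₀ hu

lemma inv_one_sub_sub_geomTrunc_mem {i : ℕ} (hi : 1 ≤ i) (n : ℕ) :
    (1 - MvPowerSeries.X 0 ^ i * MvPowerSeries.X 1)⁻¹ -
        (geomTrunc i n : MvPowerSeries (Fin 2) ℝ) ∈ Ideal.span {MvPowerSeries.X 0 ^ (n + 1)} := by
  set a : MvPowerSeries (Fin 2) ℝ := MvPowerSeries.X 0 ^ i * MvPowerSeries.X 1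
  have hinv : (1 - a)⁻¹ * (1 - a) = 1 := MvPowerSeries.inv_mul_cancel _ (by simp [a])
  have hcoe : (geomTrunc i n : MvPowerSeries (Fin 2) ℝ) = ∑ k ∈ range (n + 1), a ^ k := by
    rw [geomTrunc, ← coeToMvPowerSeries.ringHom_apply, map_sum]
    simp [a]
  rw [hcoe, sub_geom_sum_eq_pow_mul hinv, Ideal.mem_span_singleton, mul_pow, ← pow_mul, mul_assoc]
  exact (pow_dvd_pow _ (Nat.le_mul_of_pos_left _ hi)).mul_right _

lemma coeff_eulerProduct_eq_coeff_eulerTrunc (e : ℕ → ℕ) {n : ℕ} {d : Fin 2 →₀ ℕ}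
    (hd : d 0 ≤ n) :
    MvPowerSeries.coeff d (∏ i ∈ Icc 1 n,
        ((1 - MvPowerSeries.X (0 : Fin 2) ^ i * MvPowerSeries.X 1)⁻¹) ^ e i) =
      (eulerTrunc e n).coeff d := by
  rw [← coeff_coe]
  refine MvPowerSeries.coeff_eq_of_X_pow_dvd_sub (s := 0) (N := n + 1) ?_ (by omega)
  have hcoe : (eulerTrunc e n : MvPowerSeries (Fin 2) ℝ) =
      ∏ i ∈ Icc 1 n, (geomTrunc i n : MvPowerSeries (Fin 2) ℝ) ^ e i := by
    rw [eulerTrunc, ← coeToMvPowerSeries.ringHom_apply, map_prod]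
    simp
  rw [hcoe, ← Ideal.mem_span_singleton]
  exact Ideal.prod_pow_sub_prod_pow_mem
    (fun i hi => inv_one_sub_sub_geomTrunc_mem (mem_Icc.mp hi).1 n) e

lemma eval_geomTrunc (w : Fin 2 → ℝ) (i n : ℕ) :
    eval w (geomTrunc i n) = ∑ k ∈ range (n + 1), (w 0 ^ i * w 1) ^ k := by
  simp [geomTrunc]

variable {q a₂ : ℝ}

lemma eval_geomTrunc_pow_le (hq : 2 ≤ q) {i e : ℕ} (hi : 1 ≤ i) (he : (e : ℝ) ≤ a₂ * q ^ i / i)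
    (n : ℕ) : eval ![q⁻¹, 3 / 2] (geomTrunc i n ^ e) ≤ Real.exp (6 * a₂ / i) := by
  set r := q⁻¹ ^ i * (3 / 2) with hr_def
  have hq₀ : 0 < q := by linarith
  have hqi : q⁻¹ ^ i ≤ 1 / 2 :=
    (pow_le_of_le_one (by positivity) (inv_le_one_of_one_le₀ (by linarith)) (by omega)).trans
      (by rw [inv_le_comm₀ hq₀ (by norm_num)]; linarith)
  have hr₀ : 0 ≤ r := by positivity
  have hr : r ≤ 3 / 4 := by rw [hr_def]; linarith
  have he' : (e : ℝ) * q⁻¹ ^ i ≤ a₂ / i := by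
    rw [inv_pow, ← div_eq_mul_inv, div_le_iff₀ (by positivity)]
    exact he.trans_eq (by ring)
  rw [map_pow, eval_geomTrunc]
  simp only [Matrix.cons_val_zero, Matrix.cons_val_one]
  calc (∑ k ∈ range (n + 1), r ^ k) ^ e ≤ Real.exp (4 * r) ^ e :=
        pow_le_pow_left₀ (sum_nonneg fun k _ => pow_nonneg hr₀ k) (geom_sum_le_exp hr₀ hr _) e
    _ = Real.exp (6 * ((e : ℝ) * q⁻¹ ^ i)) := by rw [← Real.exp_nat_mul, hr_def]; ring_nf
    _ ≤ Real.exp (6 * a₂ / i) := Real.exp_le_exp.mpr (by rw [mul_div_assoc]; linarith)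

lemma eval_eulerTrunc_le (hq : 2 ≤ q) (ha₂ : 0 ≤ a₂) {e : ℕ → ℕ}
    (he : ∀ i, 1 ≤ i → (e i : ℝ) ≤ a₂ * q ^ i / i) (n : ℕ) :
    eval ![q⁻¹, 3 / 2] (eulerTrunc e n) ≤ Real.exp (6 * a₂ * (1 + Real.log n)) :=
  calc eval ![q⁻¹, 3 / 2] (eulerTrunc e n)
      ≤ ∏ i ∈ Icc 1 n, Real.exp (6 * a₂ / i) := by
        rw [eulerTrunc, map_prod]
        refine prod_le_prod (fun i _ => ?_) fun i hi =>
          eval_geomTrunc_pow_le hq (mem_Icc.mp hi).1 (he i (mem_Icc.mp hi).1) n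
        exact eval_nonneg_of_mem_nonnegCoeffs
          (pow_mem (geomTrunc_mem_nonnegCoeffs i n) _)
          (Fin.forall_fin_two.mpr ⟨inv_nonneg.mpr (by linarith), by norm_num⟩)
    _ = Real.exp (6 * a₂ * ∑ i ∈ Icc 1 n, (i : ℝ)⁻¹) := by
        rw [← Real.exp_sum, mul_sum]; simp only [div_eq_mul_inv]
    _ ≤ Real.exp (6 * a₂ * (1 + Real.log n)) :=
        Real.exp_le_exp.mpr (mul_le_mul_of_nonneg_left (sum_Icc_inv_le_one_add_log n)
          (by positivity))

lemma sum_coeff_eulerTrunc_mul_le (hq : 2 ≤ q) (ha₂ : 0 ≤ a₂) {e : ℕ → ℕ}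
    (he : ∀ i, 1 ≤ i → (e i : ℝ) ≤ a₂ * q ^ i / i) (n : ℕ) :
    ∑ j ∈ range (n + 1), (eulerTrunc e n).coeff (Finsupp.single 0 n + Finsupp.single 1 j) *
      (3 / 2) ^ j ≤ q ^ n * Real.exp (6 * a₂ * (1 + Real.log n)) := by
  have hqn : 0 < q ^ n := by positivity
  have h := (sum_coeff_mul_pow_le_eval (eulerTrunc_mem_nonnegCoeffs e n)
    (inv_nonneg.mpr (by linarith : (0 : ℝ) ≤ q)) (by norm_num : (0 : ℝ) ≤ 3 / 2) n (n + 1)).trans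
    (eval_eulerTrunc_le hq ha₂ he n)
  calc _ = q ^ n * ∑ j ∈ range (n + 1), (eulerTrunc e n).coeff
        (Finsupp.single 0 n + Finsupp.single 1 j) * (q⁻¹ ^ n * (3 / 2) ^ j) := by
        rw [mul_sum]
        refine sum_congr rfl fun j _ => ?_
        rw [inv_pow]
        field_simp
    _ ≤ _ := mul_le_mul_of_nonneg_left h hqn.le

end EulerProduct

/-- Let `0 < a1 ≤ a2`, `q ≥ 2`, and let `(e_i)` be nonnegative integers with
`a1 q^i / i ≤ e_i ≤ a2 q^i / i` for all `i ≥ 1`.  Define `c_{i,j}` by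
`∑ c_{i,j} x^i y^j = ∏_{i≥1} (1 - x^i y)^{-e_i}` (coefficientwise, `c_{n,j}` is the
`x^n y^j`-coefficient of the truncated product `∏_{i=1}^n (1 - x^i y)^{-e_i}`).
Then there exist `C` and `D > 1` depending only on `a1, a2` such that for all
`0 ≤ m ≤ n` (with `n ≥ 1`),
`(∑_{j=m+1}^n c_{n,j}) / (∑_{j=0}^n c_{n,j}) ≤ n^C D^{-m}`. -/
theorem euler_product_y_power_tail_bound (a1 a2 : ℝ) (ha1 : 0 < a1) (ha12 : a1 ≤ a2) :
    ∃ C D : ℝ, 1 < D ∧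
      ∀ q : ℝ, 2 ≤ q →
      ∀ e : ℕ → ℕ,
        (∀ i : ℕ, 1 ≤ i → a1 * q ^ i / i ≤ (e i : ℝ) ∧ (e i : ℝ) ≤ a2 * q ^ i / i) →
        ∀ n m : ℕ, 1 ≤ n → m ≤ n →
          (∑ j ∈ Finset.Icc (m + 1) n,
              MvPowerSeries.coeff (R := ℝ) (Finsupp.single (0 : Fin 2) n + Finsupp.single 1 j)
                (∏ i ∈ Finset.Icc 1 n,
                  ((1 - (MvPowerSeries.X (0 : Fin 2)) ^ i * MvPowerSeries.X 1)⁻¹) ^ e i)) /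
            (∑ j ∈ Finset.range (n + 1),
              MvPowerSeries.coeff (R := ℝ) (Finsupp.single (0 : Fin 2) n + Finsupp.single 1 j)
                (∏ i ∈ Finset.Icc 1 n,
                  ((1 - (MvPowerSeries.X (0 : Fin 2)) ^ i * MvPowerSeries.X 1)⁻¹) ^ e i)) ≤
          (n : ℝ) ^ C * D ^ (-(m : ℝ)) := by
  obtain ⟨L, hL₀, hL⟩ := exists_le_rpow_of_two_le (Real.exp (6 * a2) / a1)
  refine ⟨L + 6 * a2 + 1, 3 / 2, by norm_num, fun q hq e he n m hn hmn => ?_⟩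
  simp (disch := simp) only [EulerProduct.coeff_eulerProduct_eq_coeff_eulerTrunc]
  set c : ℕ → ℝ :=
    fun j => (EulerProduct.eulerTrunc e n).coeff (Finsupp.single 0 n + Finsupp.single 1 j)
  have hc : ∀ j, 0 ≤ c j := fun j => EulerProduct.eulerTrunc_mem_nonnegCoeffs e n _
  obtain rfl | hn₂ : n = 1 ∨ 2 ≤ n := by omega
  · interval_cases m
    · rw [Nat.cast_zero, neg_zero, Real.rpow_zero, Nat.cast_one, Real.one_rpow, mul_one]
      exact div_le_one_of_le₀ (sum_le_sum_of_subset_of_nonneg (by simp)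
        fun j _ _ => hc j) (sum_nonneg fun j _ => hc j)
    · rw [Icc_eq_empty (by norm_num), sum_empty, zero_div]
      positivity
  have hn₀ : (0 : ℝ) < n := by positivity
  have hden : a1 * q ^ n / n ≤ ∑ j ∈ range (n + 1), c j :=
    (he n hn).1.trans <| (EulerProduct.le_coeff_eulerTrunc e hn).trans <|
      single_le_sum (fun j _ => hc j) (mem_range.mpr (by omega : 1 < n + 1))
  have hnum : ∑ j ∈ Icc (m + 1) n, c j ≤
      (3 / 2) ^ (-(m : ℝ)) * (q ^ n * Real.exp (6 * a2 * (1 + Real.log n))) :=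
    (sum_Icc_le_rpow_neg_mul_sum hc (by norm_num) m n).trans <| mul_le_mul_of_nonneg_left
      (EulerProduct.sum_coeff_eulerTrunc_mul_le hq (ha1.le.trans ha12)
        (fun i hi => (he i hi).2) n) (by positivity)
  have hq₀ : 0 < q := by linarith
  calc _ ≤ (3 / 2) ^ (-(m : ℝ)) * (q ^ n * Real.exp (6 * a2 * (1 + Real.log n))) /
        (a1 * q ^ n / n) := div_le_div₀ (by positivity) hnum (by positivity) hden
    _ = (3 / 2) ^ (-(m : ℝ)) * (Real.exp (6 * a2) / a1 * n ^ (6 * a2) * n) := by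
        rw [Real.rpow_def_of_pos hn₀]; field_simp; rw [← Real.exp_add]; ring_nf
    _ ≤ (3 / 2) ^ (-(m : ℝ)) * (n ^ L * n ^ (6 * a2) * n) := by
        gcongr; exact hL n (by exact_mod_cast hn₂)
    _ = n ^ (L + 6 * a2 + 1) * (3 / 2) ^ (-(m : ℝ)) := by
        rw [Real.rpow_add hn₀, Real.rpow_add hn₀, Real.rpow_one]; ring
end

section
/- For a prime power q, let L_n(q) denote the set of monic polynomials P(x) ∈ F_q[x] of degree n with P(0) = (−1)^n. For every k > 0 there exists N such that for every integer n ≥ 2 and every prime power q, the number of P ∈ L_n(q) that have more than N·log n monic irreducible factors in F_q[x] (counted with multiplicity) is at most n^{−k} · |L_n(q)|. -/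
/-!
Rankin's trick. For `0 < y < q`, `c ≠ 0` and a finite set `S` of monic irreducibles, the number
of monic `P` of degree `n` with `P(0) = c`, more than `t` irreducible factors, all of them in `S`,
is at most `q ^ (n - 1) * y ^ (-t) * ∏ p ∈ S, (1 - y / q ^ deg p)⁻¹`. This follows by
induction on `t` and `S`: if `P` has more than `t + 1` factors, either the new prime `p` does
not divide `P`, or `P = p * Q` where `Q` has degree `n - deg p`, constant term `c / p(0)` and
more than `t` factors; the two contributions add up to exactly one more Euler factor.

Take `y = 3/2` and `S` the monic irreducibles of degree `≤ n`. There are at most `q ^ d / d` of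
degree `d` (their product divides `X ^ q ^ d - X`), so the Euler product is at most
`exp (6 * ∑_{d ≤ n} 1 / d) ≤ exp (6 * (1 + log n))`. Since exactly `q ^ (n - 1)` monic
polynomials of degree `n` have a given constant term, the proportion in question is at most
`(2/3) ^ t * exp (6 * (1 + log n))`, which is `≤ n ^ (-k)` once `t ≥ (3k + 60) log n - 1`.
-/

open Polynomial UniqueFactorizationMonoid

section Counting

variable {R : Type*} [Ring R]

def monicWithConstCoeff (n : ℕ) (c : R) : Set R[X] :=
  {P | P.Monic ∧ P.natDegree = n ∧ P.eval 0 = c}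

theorem finite_setOf_natDegree_le [Finite R] (n : ℕ) : {P : R[X] | P.natDegree ≤ n}.Finite := by
  classical
  exact (Set.finite_range (ofFn (n + 1))).subset fun P hP ↦
    ⟨_, ofFn_comp_toFn_eq_id_of_natDegree_lt (Nat.lt_succ_of_le hP)⟩

theorem finite_monicWithConstCoeff [Finite R] (n : ℕ) (c : R) :
    (monicWithConstCoeff n c).Finite :=
  (finite_setOf_natDegree_le n).subset fun _ hP ↦ hP.2.1.le

variable [Nontrivial R]

theorem monicWithConstCoeff_succ_eq_range [DecidableEq R] (m : ℕ) (c : R) :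
    monicWithConstCoeff (m + 1) c =
      Set.range fun w : Fin m → R ↦ X ^ (m + 1) + ofFn (m + 1) (Fin.cons c w) := by
  ext P
  constructor
  · rintro ⟨hmon, hdeg, hc⟩
    have hlow : (P - X ^ (m + 1)).natDegree < m + 1 :=
      IsMonicOfDegree.natDegree_sub_X_pow m.succ_ne_zero ⟨hdeg, hmon⟩
    refine ⟨Fin.tail (toFn (m + 1) (P - X ^ (m + 1))), ?_⟩
    have h0 : toFn (m + 1) (P - X ^ (m + 1)) 0 = c := by
      rw [← hc, ← coeff_zero_eq_eval_zero]
      simp [toFn]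
    dsimp only
    rw [← h0, Fin.cons_self_tail, ofFn_comp_toFn_eq_id_of_natDegree_lt hlow, add_sub_cancel]
  · rintro ⟨w, rfl⟩
    have hlt : (ofFn (m + 1) (Fin.cons c w : Fin (m + 1) → R)).degree < (m + 1 : ℕ) :=
      ofFn_degree_lt _
    refine ⟨monic_X_pow_add hlt, ?_, ?_⟩
    · rw [natDegree_add_eq_left_of_degree_lt (by rwa [degree_X_pow]), natDegree_X_pow]
    · simp [← coeff_zero_eq_eval_zero, ofFn_coeff_eq_val_of_lt]

theorem ncard_monicWithConstCoeff [Fintype R] {n : ℕ} (hn : n ≠ 0) (c : R) :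
    (monicWithConstCoeff n c).ncard = Fintype.card R ^ (n - 1) := by
  classical
  obtain ⟨m, rfl⟩ := Nat.exists_eq_succ_of_ne_zero hn
  rw [monicWithConstCoeff_succ_eq_range, Set.ncard_range_of_injective, Nat.card_eq_fintype_card,
    Fintype.card_fun, Fintype.card_fin, Nat.succ_sub_one]
  intro v w h
  simpa using injective_ofFn _ (add_left_cancel h)

theorem ncard_monicWithConstCoeff_le [Fintype R] (n : ℕ) (c : R) :
    (monicWithConstCoeff n c).ncard ≤ Fintype.card R ^ (n - 1) := by
  rcases eq_or_ne n 0 with rfl | hn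
  · have hsub : monicWithConstCoeff 0 c ⊆ {1} := fun P hP ↦
      eq_one_of_monic_natDegree_zero hP.1 hP.2.1
    simpa using Set.ncard_le_ncard hsub
  · exact (ncard_monicWithConstCoeff hn c).le

end Counting

section Irreducibles

variable {F : Type*} [Field F] [Fintype F]

noncomputable def monicIrreducibles (n : ℕ) : Finset F[X] :=
  ((finite_setOf_natDegree_le n).subset fun _ hp ↦ hp.2.2 :
    {p : F[X] | p.Monic ∧ Irreducible p ∧ p.natDegree ≤ n}.Finite).toFinset

theorem mem_monicIrreducibles {n : ℕ} {p : F[X]} :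
    p ∈ monicIrreducibles n ↔ p.Monic ∧ Irreducible p ∧ p.natDegree ≤ n :=
  Set.Finite.mem_toFinset _

theorem card_mul_le_card_pow_of_natDegree_eq {d : ℕ} (hd : d ≠ 0) (T : Finset F[X])
    (hT : ∀ p ∈ T, p.Monic ∧ Irreducible p ∧ p.natDegree = d) :
    T.card * d ≤ Fintype.card F ^ d := by
  have hq : 1 < Fintype.card F := Fintype.one_lt_card
  have hdvd : ∏ p ∈ T, p ∣ X ^ Fintype.card F ^ d - X := by
    refine Finset.prod_dvd_of_coprime (fun p hp r hr hpr ↦ ?_) fun p hp ↦ ?_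
    · obtain ⟨hpm, hpi, -⟩ := hT p hp
      obtain ⟨hrm, hri, -⟩ := hT r hr
      exact hpi.coprime_iff_not_dvd.mpr fun h ↦
        hpr (eq_of_monic_of_associated hpm hrm (hpi.associated_of_dvd hri h))
    · obtain ⟨-, hpi, hpd⟩ := hT p hp
      rw [← Nat.card_eq_fintype_card, ← hpi.natDegree_dvd_iff_dvd_X_pow_card_pow_sub_X, hpd]
  have := natDegree_le_of_dvd hdvd (FiniteField.X_pow_card_pow_sub_X_ne_zero F hd hq)
  rwa [natDegree_prod_of_monic _ _ fun p hp ↦ (hT p hp).1,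
    Finset.sum_congr rfl fun p hp ↦ (hT p hp).2.2, Finset.sum_const, smul_eq_mul,
    FiniteField.X_pow_card_pow_sub_X_natDegree_eq F hd hq] at this

theorem sum_monicIrreducibles_inv_card_pow_le (n : ℕ) :
    ∑ p ∈ monicIrreducibles (F := F) n, ((Fintype.card F : ℝ) ^ p.natDegree)⁻¹ ≤
      harmonic n := by
  classical
  have hmaps : ∀ p ∈ monicIrreducibles (F := F) n, p.natDegree ∈ Finset.Icc 1 n := by
    intro p hp
    obtain ⟨-, hpi, hpn⟩ := mem_monicIrreducibles.mp hp
    exact Finset.mem_Icc.mpr ⟨hpi.natDegree_pos, hpn⟩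
  rw [← Finset.sum_fiberwise_of_maps_to hmaps, harmonic_eq_sum_Icc, Rat.cast_sum]
  refine Finset.sum_le_sum fun d hd ↦ ?_
  have hd0 : d ≠ 0 := Nat.one_le_iff_ne_zero.mp (Finset.mem_Icc.mp hd).1
  have hcard := card_mul_le_card_pow_of_natDegree_eq hd0
    {p ∈ monicIrreducibles (F := F) n | p.natDegree = d} fun p hp ↦ by
      obtain ⟨hp, hpd⟩ := Finset.mem_filter.mp hp
      exact ⟨(mem_monicIrreducibles.mp hp).1, (mem_monicIrreducibles.mp hp).2.1, hpd⟩
  rw [Finset.sum_congr rfl fun p hp ↦ by rw [(Finset.mem_filter.mp hp).2], Finset.sum_const,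
    nsmul_eq_mul, Rat.cast_inv, Rat.cast_natCast, ← div_eq_mul_inv,
    div_le_iff₀ (by positivity), inv_mul_eq_div, le_div_iff₀ (by positivity)]
  exact_mod_cast hcard

theorem div_card_pow_natDegree_lt_one {y : ℝ} (hyq : y < Fintype.card F) {p : F[X]}
    (hp : Irreducible p) : y / (Fintype.card F : ℝ) ^ p.natDegree < 1 := by
  have hq : (1 : ℝ) ≤ Fintype.card F := by exact_mod_cast Fintype.card_pos
  rw [div_lt_one (by positivity)]
  exact hyq.trans_le (le_self_pow₀ hq hp.natDegree_pos.ne')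

theorem one_le_inv_one_sub_div_card_pow {y : ℝ} (hy : 0 ≤ y) (hyq : y < Fintype.card F)
    {p : F[X]} (hp : Irreducible p) : 1 ≤ (1 - y / (Fintype.card F : ℝ) ^ p.natDegree)⁻¹ :=
  (one_le_inv₀ (sub_pos.mpr (div_card_pow_natDegree_lt_one hyq hp))).mpr
    (sub_le_self _ (by positivity))

theorem one_le_prod_inv_one_sub_div_card_pow {y : ℝ} (hy : 0 ≤ y) (hyq : y < Fintype.card F)
    {S : Finset F[X]} (hS : ∀ p ∈ S, Irreducible p) :
    1 ≤ ∏ p ∈ S, (1 - y / (Fintype.card F : ℝ) ^ p.natDegree)⁻¹ :=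
  Finset.one_le_prod fun p hp ↦ one_le_inv_one_sub_div_card_pow hy hyq (hS p hp)

end Irreducibles

section Rankin

variable {F : Type*} [Field F] [DecidableEq F]

def manyFactorsOver (S : Finset F[X]) (t n : ℕ) (c : F) : Set F[X] :=
  {P ∈ monicWithConstCoeff n c |
    t < (normalizedFactors P).card ∧ ∀ r ∈ normalizedFactors P, r ∈ S}

theorem manyFactorsOver_finite [Finite F] (S : Finset F[X]) (t n : ℕ) (c : F) :
    (manyFactorsOver S t n c).Finite :=
  (finite_monicWithConstCoeff n c).subset (Set.sep_subset _ _)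

theorem manyFactorsOver_natDegree_zero (S : Finset F[X]) (t : ℕ) (c : F) :
    manyFactorsOver S t 0 c = ∅ := by
  refine Set.eq_empty_of_forall_notMem fun P ⟨⟨hmon, hdeg, _⟩, hcard, _⟩ ↦ ?_
  simp [eq_one_of_monic_natDegree_zero hmon hdeg] at hcard

theorem manyFactorsOver_empty (t n : ℕ) (c : F) : manyFactorsOver ∅ (t + 1) n c = ∅ := by
  refine Set.eq_empty_of_forall_notMem fun P hP ↦ ?_
  obtain ⟨r, hr⟩ := Multiset.card_pos_iff_exists_mem.mp (Nat.zero_lt_of_lt hP.2.1)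
  exact Finset.notMem_empty r (hP.2.2 r hr)

theorem mem_manyFactorsOver_of_not_dvd {S : Finset F[X]} {t n : ℕ} {c : F} {p P : F[X]}
    (hP : P ∈ manyFactorsOver (insert p S) t n c) (hpP : ¬p ∣ P) :
    P ∈ manyFactorsOver S t n c := by
  refine ⟨hP.1, hP.2.1, fun r hr ↦ (Finset.mem_insert.mp (hP.2.2 r hr)).resolve_left ?_⟩
  rintro rfl
  exact hpP (dvd_of_mem_normalizedFactors hr)

theorem exists_mem_manyFactorsOver_of_dvd {S : Finset F[X]} {t n : ℕ} {c : F} (hc : c ≠ 0)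
    {p P : F[X]} (hpm : p.Monic) (hpi : Irreducible p)
    (hP : P ∈ manyFactorsOver S (t + 1) n c) (hpP : p ∣ P) :
    p.eval 0 ≠ 0 ∧ p.natDegree < n ∧
      ∃ Q ∈ manyFactorsOver S t (n - p.natDegree) (c / p.eval 0), P = p * Q := by
  obtain ⟨Q, rfl⟩ := hpP
  obtain ⟨⟨hmon, hdeg, heval⟩, hcard, hS⟩ := hP
  have hQm : Q.Monic := hpm.of_mul_monic_left hmon
  have hfac : normalizedFactors (p * Q) = p ::ₘ normalizedFactors Q := by
    rw [normalizedFactors_mul hpm.ne_zero hQm.ne_zero, normalizedFactors_irreducible hpi,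
      hpm.normalize_eq_self, Multiset.singleton_add]
  rw [eval_mul] at heval
  have hp0 : p.eval 0 ≠ 0 := left_ne_zero_of_mul (heval ▸ hc)
  have hQ : Q ∈ manyFactorsOver S t (n - p.natDegree) (c / p.eval 0) := by
    refine ⟨⟨hQm, ?_, ?_⟩, ?_, fun r hr ↦ hS r ?_⟩
    · rw [← hdeg, hpm.natDegree_mul hQm, Nat.add_sub_cancel_left]
    · rw [← heval, mul_div_cancel_left₀ _ hp0]
    · rwa [hfac, Multiset.card_cons, Nat.add_lt_add_iff_right] at hcard
    · rw [hfac]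
      exact Multiset.mem_cons_of_mem hr
  refine ⟨hp0, Nat.lt_of_sub_ne_zero fun h ↦ ?_, Q, hQ, rfl⟩
  rw [h, manyFactorsOver_natDegree_zero] at hQ
  exact hQ

theorem ncard_manyFactorsOver_inter_dvd_le [Finite F] {S : Finset F[X]} {t n : ℕ} {c : F}
    (hc : c ≠ 0) {p : F[X]} (hpm : p.Monic) (hpi : Irreducible p) :
    (manyFactorsOver S (t + 1) n c ∩ {P | p ∣ P}).ncard ≤
      (manyFactorsOver S t (n - p.natDegree) (c / p.eval 0)).ncard := by
  have hsub : manyFactorsOver S (t + 1) n c ∩ {P | p ∣ P} ⊆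
      (p * ·) '' manyFactorsOver S t (n - p.natDegree) (c / p.eval 0) := fun P hP ↦ by
    obtain ⟨-, -, Q, hQ, rfl⟩ := exists_mem_manyFactorsOver_of_dvd hc hpm hpi hP.1 hP.2
    exact ⟨Q, hQ, rfl⟩
  exact (Set.ncard_le_ncard hsub ((manyFactorsOver_finite _ _ _ _).image _)).trans
    (Set.ncard_image_le (manyFactorsOver_finite _ _ _ _))

theorem ncard_manyFactorsOver_insert_le [Finite F] {S : Finset F[X]} {t n : ℕ} {c : F}
    (hc : c ≠ 0) {p : F[X]} (hpm : p.Monic) (hpi : Irreducible p) {Y : ℝ} (hY : 0 ≤ Y)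
    -- both side conditions hold as soon as some `P` in the set on the left is divisible by `p`
    (hdvd : p.eval 0 ≠ 0 → p.natDegree < n →
      ((manyFactorsOver (insert p S) t (n - p.natDegree) (c / p.eval 0)).ncard : ℝ) ≤ Y) :
    ((manyFactorsOver (insert p S) (t + 1) n c).ncard : ℝ) ≤
      (manyFactorsOver S (t + 1) n c).ncard + Y := by
  set M := manyFactorsOver (insert p S) (t + 1) n c
  rw [← Set.ncard_inter_add_ncard_sdiff_eq_ncard M {P | p ∣ P} (manyFactorsOver_finite _ _ _ _),
    Nat.cast_add, add_comm]
  refine add_le_add (Nat.cast_le.mpr (Set.ncard_le_ncard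
    (fun P hP ↦ mem_manyFactorsOver_of_not_dvd hP.1 hP.2) (manyFactorsOver_finite _ _ _ _))) ?_
  rcases (M ∩ {P | p ∣ P}).eq_empty_or_nonempty with hempty | ⟨P₀, hP₀⟩
  · simpa [hempty] using hY
  obtain ⟨hp0, hdn, -⟩ := exists_mem_manyFactorsOver_of_dvd hc hpm hpi hP₀.1 hP₀.2
  exact (Nat.cast_le.mpr (ncard_manyFactorsOver_inter_dvd_le hc hpm hpi)).trans (hdvd hp0 hdn)

theorem ncard_manyFactorsOver_le [Fintype F] {y : ℝ} (hy : 0 < y) (hyq : y < Fintype.card F)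
    (t n : ℕ) {c : F} (hc : c ≠ 0) (S : Finset F[X])
    (hS : ∀ p ∈ S, p.Monic ∧ Irreducible p) :
    ((manyFactorsOver S t n c).ncard : ℝ) ≤ (Fintype.card F : ℝ) ^ (n - 1) / y ^ t *
      ∏ p ∈ S, (1 - y / (Fintype.card F : ℝ) ^ p.natDegree)⁻¹ := by
  set q : ℝ := (Fintype.card F : ℝ)
  induction t generalizing n c S with
  | zero =>
    calc ((manyFactorsOver S 0 n c).ncard : ℝ) ≤ (monicWithConstCoeff n c).ncard := by
          exact_mod_cast Set.ncard_le_ncard (Set.sep_subset _ _) (finite_monicWithConstCoeff n c)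
      _ ≤ q ^ (n - 1) := by
          simp only [q]
          exact_mod_cast ncard_monicWithConstCoeff_le n c
      _ ≤ _ := by
          rw [pow_zero, div_one]
          exact le_mul_of_one_le_right (by positivity)
            (one_le_prod_inv_one_sub_div_card_pow hy.le hyq fun p hp ↦ (hS p hp).2)
  | succ t iht =>
    induction S using Finset.induction_on with
    | empty =>
      rw [manyFactorsOver_empty, Set.ncard_empty, Nat.cast_zero]
      positivity
    | insert p S hpS ihS =>
      obtain ⟨hpm, hpi⟩ := hS p (Finset.mem_insert_self p S)
      have hS' : ∀ r ∈ S, r.Monic ∧ Irreducible r :=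
        fun r hr ↦ hS r (Finset.mem_insert_of_mem hr)
      have hB := one_le_prod_inv_one_sub_div_card_pow hy.le hyq fun r hr ↦ (hS' r hr).2
      have hyD : y < q ^ p.natDegree :=
        (div_lt_one (by positivity)).mp (div_card_pow_natDegree_lt_one hyq hpi)
      have hfactor := one_le_inv_one_sub_div_card_pow hy.le hyq hpi
      rw [Finset.prod_insert hpS]
      set B := ∏ r ∈ S, (1 - y / q ^ r.natDegree)⁻¹
      calc _ ≤ (manyFactorsOver S (t + 1) n c).ncard + q ^ (n - 1) / q ^ p.natDegree / y ^ t *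
            ((1 - y / q ^ p.natDegree)⁻¹ * B) := by
            have hY : 0 ≤ q ^ (n - 1) / q ^ p.natDegree / y ^ t *
                ((1 - y / q ^ p.natDegree)⁻¹ * B) :=
              mul_nonneg (by positivity)
                (mul_nonneg (zero_le_one.trans hfactor) (zero_le_one.trans hB))
            refine ncard_manyFactorsOver_insert_le hc hpm hpi hY fun hp0 hdn ↦ ?_
            have := iht (n - p.natDegree) (div_ne_zero hc hp0) (insert p S) hS
            rwa [Finset.prod_insert hpS, Nat.sub_right_comm,
              pow_sub₀ _ (by positivity) (by omega)] at this
        _ ≤ q ^ (n - 1) / y ^ (t + 1) * B + q ^ (n - 1) / q ^ p.natDegree / y ^ t *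
            ((1 - y / q ^ p.natDegree)⁻¹ * B) := by
            gcongr
            exact ihS hS'
        _ = _ := by
          generalize q ^ p.natDegree = D at hyD ⊢
          field_simp [(sub_pos.mpr hyD).ne', (hy.trans hyD).ne']
          ring

theorem setOf_lt_card_factors_subset_manyFactorsOver [Fintype F] {x : ℝ} (hx : 0 ≤ x) (n : ℕ)
    (c : F) :
    {P : F[X] | P.Monic ∧ P.natDegree = n ∧ P.eval 0 = c ∧ x < (factors P).card} ⊆
      manyFactorsOver (monicIrreducibles n) ⌊x⌋₊ n c := by
  rintro P ⟨hm, hd, he, hlt⟩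
  refine ⟨⟨hm, hd, he⟩, ?_, fun r hr ↦ ?_⟩
  · rw [normalizedFactors, Multiset.card_map]
    exact (Nat.floor_lt hx).mpr hlt
  · obtain ⟨hri, hrm, hrP⟩ := (Polynomial.mem_normalizedFactors_iff hm.ne_zero).mp hr
    exact mem_monicIrreducibles.mpr ⟨hrm, hri, hd ▸ natDegree_le_of_dvd hrP hm.ne_zero⟩

end Rankin

section Estimates

theorem inv_one_sub_le_exp_four_mul {u : ℝ} (hu0 : 0 ≤ u) (hu : u ≤ 3 / 4) :
    (1 - u)⁻¹ ≤ Real.exp (4 * u) := by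
  rw [inv_le_iff_one_le_mul₀ (by linarith)]
  nlinarith [mul_le_mul_of_nonneg_right (Real.add_one_le_exp (4 * u)) (by linarith : 0 ≤ 1 - u)]

theorem prod_monicIrreducibles_le_exp {F : Type*} [Field F] [Fintype F] (n : ℕ) :
    ∏ p ∈ monicIrreducibles (F := F) n,
        (1 - 3 / 2 / (Fintype.card F : ℝ) ^ p.natDegree)⁻¹ ≤
      Real.exp (6 * (1 + Real.log n)) := by
  have hq : (2 : ℝ) ≤ Fintype.card F := by exact_mod_cast Fintype.one_lt_card
  have hfactor : ∀ p ∈ monicIrreducibles (F := F) n,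
      (1 - 3 / 2 / (Fintype.card F : ℝ) ^ p.natDegree)⁻¹ ≤
        Real.exp (6 * ((Fintype.card F : ℝ) ^ p.natDegree)⁻¹) := fun p hp ↦ by
    have hd := (mem_monicIrreducibles.mp hp).2.1.natDegree_pos
    have hqd : (2 : ℝ) ≤ (Fintype.card F : ℝ) ^ p.natDegree :=
      hq.trans (le_self_pow₀ (by linarith) hd.ne')
    refine (inv_one_sub_le_exp_four_mul (by positivity) ?_).trans_eq (by ring_nf)
    rw [div_le_iff₀ (by positivity)]
    linarith
  calc _ ≤ ∏ p ∈ monicIrreducibles (F := F) n,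
        Real.exp (6 * ((Fintype.card F : ℝ) ^ p.natDegree)⁻¹) :=
        Finset.prod_le_prod (fun p hp ↦ zero_le_one.trans
          (one_le_inv_one_sub_div_card_pow (by norm_num) (by linarith)
            (mem_monicIrreducibles.mp hp).2.1)) hfactor
    _ = Real.exp (6 * ∑ p ∈ monicIrreducibles (F := F) n,
        ((Fintype.card F : ℝ) ^ p.natDegree)⁻¹) := by
        rw [← Real.exp_sum, Finset.mul_sum]
    _ ≤ Real.exp (6 * (1 + Real.log n)) := by
        gcongr
        exact (sum_monicIrreducibles_inv_card_pow_le n).trans (harmonic_le_one_add_log n)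

theorem exp_div_three_halves_pow_floor_le {k : ℝ} (hk : 0 ≤ k) {n : ℕ} (hn : 2 ≤ n) :
    Real.exp (6 * (1 + Real.log n)) / (3 / 2) ^ ⌊(3 * k + 60) * Real.log n⌋₊ ≤
      (n : ℝ) ^ (-k) := by
  have hL : 1 / 2 ≤ Real.log n := by
    have := Real.one_sub_inv_le_log_of_pos (two_pos : (0 : ℝ) < 2)
    have : Real.log 2 ≤ Real.log n := Real.log_le_log two_pos (by exact_mod_cast hn)
    linarith
  have ha : 1 / 3 ≤ Real.log (3 / 2) := by
    have := Real.one_sub_inv_le_log_of_pos (by norm_num : (0 : ℝ) < 3 / 2)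
    norm_num at this ⊢
    linarith
  have hx : 0 ≤ (3 * k + 60) * Real.log n := by positivity
  have ht := (Nat.lt_floor_add_one ((3 * k + 60) * Real.log n)).le
  rw [Real.rpow_def_of_pos (by positivity), ← Real.exp_log (by norm_num : (0 : ℝ) < 3 / 2),
    ← Real.exp_nat_mul, ← Real.exp_sub, Real.exp_le_exp]
  nlinarith [mul_le_mul_of_nonneg_right ht (by linarith : 0 ≤ Real.log (3 / 2)),
    mul_le_mul_of_nonneg_left ha hx]

end Estimates

/-- For every `k > 0` there exists `N` such that for every `n ≥ 2` and every finite field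
`F_q`, the number of monic polynomials `P` of degree `n` with `P(0) = (-1)^n` having more
than `N log n` monic irreducible factors (with multiplicity) is at most `n^{-k}` times
the total number of such polynomials. -/
theorem few_factors_SL (k : ℝ) (hk : 0 < k) :
    ∃ N : ℝ, ∀ n : ℕ, 2 ≤ n → ∀ q : ℕ, IsPrimePow q →
      ∀ (F : Type) [Field F] [Fintype F], Fintype.card F = q →
      (Set.ncard {P : Polynomial F | P.Monic ∧ P.natDegree = n ∧ P.eval 0 = (-1) ^ n ∧
          N * Real.log n <
            ((UniqueFactorizationMonoid.factors P).card : ℝ)} : ℝ) ≤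
        (n : ℝ) ^ (-k) *
          (Set.ncard {P : Polynomial F | P.Monic ∧ P.natDegree = n ∧
            P.eval 0 = (-1) ^ n} : ℝ) := by
  refine ⟨3 * k + 60, fun n hn _ _ F _ _ _ ↦ ?_⟩
  classical
  set t := ⌊(3 * k + 60) * Real.log n⌋₊
  have hc : ((-1) ^ n : F) ≠ 0 := pow_ne_zero n (neg_ne_zero.mpr one_ne_zero)
  have hq : (3 / 2 : ℝ) < Fintype.card F := by
    have : (2 : ℝ) ≤ Fintype.card F := by exact_mod_cast Fintype.one_lt_card
    linarith
  calc _ ≤ ((manyFactorsOver (monicIrreducibles n) t n ((-1) ^ n : F)).ncard : ℝ) := by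
        exact Nat.cast_le.mpr (Set.ncard_le_ncard
          (setOf_lt_card_factors_subset_manyFactorsOver (by positivity) n _)
          (manyFactorsOver_finite _ _ _ _))
    _ ≤ (Fintype.card F : ℝ) ^ (n - 1) / (3 / 2) ^ t *
        ∏ p ∈ monicIrreducibles n, (1 - 3 / 2 / (Fintype.card F : ℝ) ^ p.natDegree)⁻¹ :=
        ncard_manyFactorsOver_le (by norm_num) hq t n hc _ fun p hp ↦
          ⟨(mem_monicIrreducibles.mp hp).1, (mem_monicIrreducibles.mp hp).2.1⟩
    _ ≤ (Fintype.card F : ℝ) ^ (n - 1) * (Real.exp (6 * (1 + Real.log n)) / (3 / 2) ^ t) := by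
        rw [mul_div_assoc', div_mul_eq_mul_div]
        gcongr
        exact prod_monicIrreducibles_le_exp n
    _ ≤ (Fintype.card F : ℝ) ^ (n - 1) * (n : ℝ) ^ (-k) := by
        gcongr
        exact exp_div_three_halves_pow_floor_le hk.le hn
    _ = _ := by
        rw [mul_comm]
        congr 1
        exact_mod_cast (ncard_monicWithConstCoeff (by omega) ((-1) ^ n : F)).symm
end

section
/- There exists an absolute constant c such that for every finite field F_q and all positive integers m and n, the number of monic irreducible polynomials f ∈ F_q[x] of degree n that have two distinct roots α ≠ β in an algebraic closure of F_q with (α β^{−1})^m = 1 is at most c · m · n · q^{n/2}. -/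
/-!
If `α ≠ β` are roots of an irreducible `f` of degree `n` over `𝔽_q`, then `β = α ^ q ^ j` for
some `0 < j < n`, and since also `α = β ^ q ^ (n - j)` we may swap them to get `j ≤ n / 2`.
Then `α ^ m = β ^ m = (α ^ m) ^ q ^ j` gives `α ^ (m * (q ^ j - 1)) = 1`. So `f`, the minimal
polynomial of `α`, is determined by one of the at most `(n / 2) * m * q ^ (n / 2)` roots of the
polynomials `X ^ (m * (q ^ k - 1)) - 1` with `1 ≤ k ≤ n / 2`, and `c = 1` works.
-/

open Polynomial IntermediateField

theorem pow_mul_sub_one_eq_one {M : Type*} [MonoidWithZero M] [NoZeroDivisors M]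
    [IsRightCancelMulZero M] {x : M} (hx : x ≠ 0) {m N : ℕ} (hN : 1 ≤ N)
    (h : (x ^ N) ^ m = x ^ m) : x ^ (m * (N - 1)) = 1 := by
  refine mul_right_cancel₀ (pow_ne_zero m hx) ?_
  rw [← pow_add, ← Nat.mul_add_one, Nat.sub_add_cancel hN, one_mul, ← h, ← pow_mul, mul_comm N]

theorem ncard_le_card_of_forall_exists_aeval_eq_zero {F K : Type*} [Field F] [Field K]
    [Algebra F K] {S : Set F[X]} (T : Finset K)
    (hS : ∀ f ∈ S, f.Monic ∧ Irreducible f ∧ ∃ γ ∈ T, aeval γ f = 0) : S.ncard ≤ T.card := by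
  have hsub : S ⊆ minpoly F '' (T : Set K) := by
    rintro f hf
    obtain ⟨hmonic, hirr, γ, hγT, hγ⟩ := hS f hf
    exact ⟨γ, hγT, (minpoly.eq_of_irreducible_of_monic hirr hγ hmonic).symm⟩
  calc S.ncard ≤ (minpoly F '' (T : Set K)).ncard :=
        Set.ncard_le_ncard hsub (T.finite_toSet.image _)
    _ ≤ T.card := (Set.ncard_image_le T.finite_toSet).trans (Set.ncard_coe_finset T).le

namespace FiniteField

variable {F K : Type*} [Field F] [Fintype F] [Field K] [Algebra F K]

theorem pow_card_pow_natDegree_minpoly {α : K} (hα : IsIntegral F α) :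
    α ^ Fintype.card F ^ (minpoly F α).natDegree = α := by
  have : FiniteDimensional F F⟮α⟯ := adjoin.finiteDimensional hα
  have : Finite F⟮α⟯ := Module.finite_of_finite F
  have : Fintype F⟮α⟯ := Fintype.ofFinite _
  have hcard : Fintype.card F⟮α⟯ = Fintype.card F ^ (minpoly F α).natDegree := by
    rw [Module.card_eq_pow_finrank (K := F), adjoin.finrank hα]
  simpa [hcard] using congrArg Subtype.val (pow_card (⟨α, mem_adjoin_simple_self F α⟩ : F⟮α⟯))

theorem exists_eq_pow_card_pow_of_minpoly_eq [Normal F K] {α β : K}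
    (h : minpoly F α = minpoly F β) :
    ∃ j < (minpoly F α).natDegree, β = α ^ Fintype.card F ^ j := by
  have hα : IsIntegral F α := Normal.isIntegral inferInstance α
  obtain ⟨σ, rfl⟩ := (Normal.minpoly_eq_iff_mem_orbit K).mp h.symm
  have : FiniteDimensional F F⟮α⟯ := adjoin.finiteDimensional hα
  have : Finite F⟮α⟯ := Module.finite_of_finite F
  -- `σ` restricted to `F⟮α⟯` is a power of the Frobenius
  obtain ⟨j, hj⟩ := (bijective_frobeniusAlgEquivOfAlgebraic_pow F F⟮α⟯).2 (σ.restrictNormal F⟮α⟯)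
  refine ⟨j, adjoin.finrank hα ▸ j.2, ?_⟩
  have hσα := σ.restrictNormal_commutes F⟮α⟯ ⟨α, mem_adjoin_simple_self F α⟩
  rw [← hj, AlgEquiv.coe_pow, coe_frobeniusAlgEquivOfAlgebraic_iterate] at hσα
  exact_mod_cast hσα.symm

variable (K) in
open Classical in
noncomputable def candidateRoots (q m n : ℕ) : Finset K :=
  (Finset.Icc 1 (n / 2)).biUnion fun k => nthRootsFinset (m * (q ^ k - 1)) (1 : K)

theorem card_candidateRoots_le {q : ℕ} (hq : 0 < q) (m n : ℕ) :
    (candidateRoots K q m n).card ≤ n / 2 * (m * q ^ (n / 2)) := by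
  classical
  refine Finset.card_biUnion_le.trans ?_
  refine (Finset.sum_le_card_nsmul _ _ (m * q ^ (n / 2)) fun k hk => ?_).trans (by simp)
  calc (nthRootsFinset (m * (q ^ k - 1)) (1 : K)).card
      ≤ m * (q ^ k - 1) := (Multiset.toFinset_card_le _).trans (card_nthRoots _ _)
    _ ≤ m * q ^ (n / 2) := Nat.mul_le_mul_left m
      ((Nat.sub_le _ _).trans (Nat.pow_le_pow_right hq (Finset.mem_Icc.mp hk).2))

theorem mem_candidateRoots {q m k n : ℕ} (hq : 1 < q) (hm : 0 < m) (hk : 1 ≤ k) (hkn : 2 * k ≤ n)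
    {γ : K} (hγ : γ ≠ 0) (h : (γ ^ q ^ k) ^ m = γ ^ m) : γ ∈ candidateRoots K q m n := by
  classical
  have hqk : 1 < q ^ k := Nat.one_lt_pow (by omega) hq
  refine Finset.mem_biUnion.mpr ⟨k, Finset.mem_Icc.mpr ⟨hk, by omega⟩, ?_⟩
  rw [mem_nthRootsFinset (Nat.mul_pos hm (by omega))]
  exact pow_mul_sub_one_eq_one hγ hqk.le h

theorem mem_candidateRoots_or_mem_candidateRoots [Normal F K] {m : ℕ} (hm : 0 < m) {α β : K}
    (hne : α ≠ β) (h : minpoly F α = minpoly F β) (hratio : (α * β⁻¹) ^ m = 1) :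
    α ∈ candidateRoots K (Fintype.card F) m (minpoly F α).natDegree ∨
      β ∈ candidateRoots K (Fintype.card F) m (minpoly F α).natDegree := by
  have hq : 1 < Fintype.card F := Fintype.one_lt_card
  have hβ : β ≠ 0 := by rintro rfl; simp [zero_pow hm.ne'] at hratio
  have hα : α ≠ 0 := by rintro rfl; simp [zero_pow hm.ne'] at hratio
  have hpow : α ^ m = β ^ m := by
    rwa [mul_pow, inv_pow, mul_inv_eq_one₀ (pow_ne_zero _ hβ)] at hratio
  obtain ⟨j, hjn, rfl⟩ := exists_eq_pow_card_pow_of_minpoly_eq h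
  have hj : j ≠ 0 := by rintro rfl; simp at hne
  by_cases hjn' : 2 * j ≤ (minpoly F α).natDegree
  · exact .inl (mem_candidateRoots hq hm (by omega) hjn' hα hpow.symm)
  · have hβα : (α ^ Fintype.card F ^ j) ^ Fintype.card F ^ ((minpoly F α).natDegree - j) = α := by
      rw [← pow_mul, ← pow_add, Nat.add_sub_cancel' hjn.le,
        pow_card_pow_natDegree_minpoly (Normal.isIntegral inferInstance α)]
    exact .inr (mem_candidateRoots (k := (minpoly F α).natDegree - j) hq hm (by omega)
      (by omega) hβ (by rw [hβα, hpow]))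

end FiniteField

open FiniteField

/-- There is an absolute constant `c` such that for every finite field `F_q` and all
positive integers `m` and `n`, the number of monic irreducible polynomials of degree `n`
over `F_q` having two distinct roots `α ≠ β` in the algebraic closure with
`(α β⁻¹)^m = 1` is at most `c · m · n · q^{n/2}`. -/
theorem count_irreducibles_with_root_ratio_root_of_unity :
    ∃ c : ℝ, ∀ (F : Type) [Field F] [Fintype F] (m n : ℕ), 0 < m → 0 < n →
      (Set.ncard {f : Polynomial F | f.Monic ∧ Irreducible f ∧ f.natDegree = n ∧
          ∃ α β : AlgebraicClosure F, α ≠ β ∧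
            Polynomial.aeval α f = 0 ∧ Polynomial.aeval β f = 0 ∧
            (α * β⁻¹) ^ m = 1} : ℝ) ≤
        c * m * n * (Fintype.card F : ℝ) ^ ((n : ℝ) / 2) := by
  refine ⟨1, fun F _ _ m n hm _ => ?_⟩
  have hq : 0 < Fintype.card F := Fintype.card_pos
  calc _ ≤ ((n / 2 * (m * Fintype.card F ^ (n / 2)) : ℕ) : ℝ) := by
        refine Nat.cast_le.mpr ((ncard_le_card_of_forall_exists_aeval_eq_zero
          (candidateRoots (AlgebraicClosure F) (Fintype.card F) m n) ?_).trans
          (card_candidateRoots_le hq m n))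
        rintro f ⟨hmonic, hirr, rfl, α, β, hne, hα, hβ, hratio⟩
        have hfα := minpoly.eq_of_irreducible_of_monic hirr hα hmonic
        have hfβ := minpoly.eq_of_irreducible_of_monic hirr hβ hmonic
        refine ⟨hmonic, hirr, ?_⟩
        rcases mem_candidateRoots_or_mem_candidateRoots hm hne (hfα.symm.trans hfβ) hratio with
          hαT | hβT
        · exact ⟨α, by rwa [hfα], hα⟩
        · exact ⟨β, by rwa [hfα], hβ⟩
    _ ≤ n * (m * (Fintype.card F : ℝ) ^ ((n : ℝ) / 2)) := by
        push_cast
        gcongr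
        · exact_mod_cast Nat.div_le_self n 2
        · rw [← Real.rpow_natCast]
          exact Real.rpow_le_rpow_of_exponent_le (by exact_mod_cast hq) Nat.cast_div_le
    _ = 1 * m * n * (Fintype.card F : ℝ) ^ ((n : ℝ) / 2) := by ring
end
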